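/- (Theorem 7, f-state-aware large-α clipping.) Let f : ℝ → ℝ be monotone increasing with f(x) ≥ 0 for x ≥ 0. In the setting of Theorem 1, assume α > 0, d^D(s) > 0 and Dis(π)(s) ≥ 0 for all π ∈ Π and s, set w^π(s) := d_D^π(s)/d^D(s), and for C > 0 define the clipped f-weight (s ↦ min(f(w^π(s)), C)). Let π̄ ∈ Π be a minimizer over Π of INF_{Dis}(π) := ⟨ρ, V^{π*} − V^π⟩ + ⟨d_D^π, u^π + α·Dis(π)⟩. If there exists a state s₀ with d_D^{π̄}(s₀)·Dis(π̄)(s₀) > 0 and f(w^{π̄}(s₀)) < 1, then there exists C > 1 such that min_{π∈Π} ( ⟨ρ, V^{π*} − V^π⟩ + ⟨d_D^π, u^π + α·(min(f∘w^π, C))·Dis(π)⟩ ) ≤ min_{π∈Π} INF_{Dis}(π). -/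

import Mathlib

open Matrix Finset

/-- The activity matrix `Aπ` of a policy `π`: `Aπ s (s', a) = π s a` if `s' = s`, else `0`. -/
def actMat {S A : Type*} [DecidableEq S] (π : S → A → ℝ) : Matrix S (S × A) ℝ :=
  Matrix.of fun s p => if p.1 = s then π s p.2 else 0

/-- The value vector `V^π = (I − γ Aπ P)⁻¹ (Aπ r)`. -/
noncomputable def valVec {S A : Type*} [Fintype S] [Fintype A] [DecidableEq S]
    (γ : ℝ) (P : Matrix (S × A) S ℝ) (r : S × A → ℝ) (π : S → A → ℝ) : S → ℝ :=
  (1 - γ • (actMat π * P))⁻¹.mulVec ((actMat π).mulVec r)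

/-- The discounted occupancy row vector `d^π = ρᵀ (I − γ Aπ P)⁻¹`. -/
noncomputable def occVec {S A : Type*} [Fintype S] [Fintype A] [DecidableEq S]
    (γ : ℝ) (P : Matrix (S × A) S ℝ) (ρ : S → ℝ) (π : S → A → ℝ) : S → ℝ :=
  Matrix.vecMul ρ (1 - γ • (actMat π * P))⁻¹

/-- The normalized discounted occupancy `(1 − γ)·ρᵀ (I − γ Aπ P)⁻¹`. -/
noncomputable def noccVec {S A : Type*} [Fintype S] [Fintype A] [DecidableEq S]
    (γ : ℝ) (P : Matrix (S × A) S ℝ) (ρ : S → ℝ) (π : S → A → ℝ) : S → ℝ :=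
  fun s => (1 - γ) * Matrix.vecMul ρ (1 - γ • (actMat π * P))⁻¹ s

/-!
Evaluate the clipped objective at the minimizer `π̄` of the unclipped one. The occupancy
`d_D^π̄` is nonnegative, since `(1 - γ Aπ P_D)⁻¹` is a Neumann series of nonnegative matrices.
Hence, with weights `x s = d_D^π̄(s) · Dis(π̄)(s) ≥ 0`, clipping at `C` saves at least
`x s₀ (1 - f(w(s₀)))` at `s₀` and costs at most `(C - 1) ∑ x` elsewhere, so
`C = 1 + x s₀ (1 - f(w(s₀))) / ∑ x` makes the clipped penalty at `π̄` no larger than the plain one.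
-/

section LinftyOpNorm

attribute [local instance] Matrix.linftyOpNormedRing Matrix.linftyOpNormedAlgebra

theorem linfty_opNorm_le_one_of_mem_rowStochastic {n : Type*} [Fintype n] [DecidableEq n]
    {M : Matrix n n ℝ} (hM : M ∈ rowStochastic ℝ n) : ‖M‖ ≤ 1 := by
  rw [linfty_opNorm_def, ← NNReal.coe_one, NNReal.coe_le_coe]
  refine Finset.sup_le fun i _ => ?_
  rw [← NNReal.coe_le_coe]
  push_cast
  simp_rw [Real.norm_of_nonneg (hM.1 _ _), sum_row_of_mem_rowStochastic hM i, le_refl]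

theorem inv_one_sub_smul_nonneg_of_mem_rowStochastic {n : Type*} [Fintype n] [DecidableEq n]
    {M : Matrix n n ℝ} (hM : M ∈ rowStochastic ℝ n) {γ : ℝ} (hγ0 : 0 ≤ γ) (hγ1 : γ < 1)
    (i j : n) : 0 ≤ (1 - γ • M)⁻¹ i j := by
  have : CompleteSpace (Matrix n n ℝ) := FiniteDimensional.complete ℝ _
  have hnorm : ‖γ • M‖ < 1 :=
    calc ‖γ • M‖ ≤ ‖γ‖ * ‖M‖ := norm_smul_le γ M
      _ ≤ γ * 1 := by
        rw [Real.norm_of_nonneg hγ0]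
        exact mul_le_mul_of_nonneg_left (linfty_opNorm_le_one_of_mem_rowStochastic hM) hγ0
      _ < 1 := by linarith
  have hsum := (hasSum_geom_series_inverse _ hnorm).map (entryLinearMap ℝ ℝ i j)
    (entryLinearMap ℝ ℝ i j).continuous_of_finiteDimensional
  rw [nonsing_inv_eq_ringInverse]
  refine hsum.nonneg fun k => ?_
  rw [Function.comp_apply, entryLinearMap_apply, smul_pow, Matrix.smul_apply, smul_eq_mul]
  exact mul_nonneg (pow_nonneg hγ0 k) (nonneg_of_mem_rowStochastic (pow_mem hM k))

end LinftyOpNorm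

theorem actMat_mul_apply {S A : Type*} [Fintype S] [Fintype A] [DecidableEq S]
    (π : S → A → ℝ) (P : Matrix (S × A) S ℝ) (s t : S) :
    (actMat π * P) s t = ∑ a, π s a * P (s, a) t := by
  simp [mul_apply, actMat, Fintype.sum_prod_type, ite_mul]

theorem actMat_mul_mem_rowStochastic {S A : Type*} [Fintype S] [Fintype A] [DecidableEq S]
    {π : S → A → ℝ} (hπ0 : ∀ s a, 0 ≤ π s a) (hπ1 : ∀ s, ∑ a, π s a = 1)
    {P : Matrix (S × A) S ℝ} (hP0 : ∀ p s, 0 ≤ P p s) (hP1 : ∀ p, ∑ s, P p s = 1) :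
    actMat π * P ∈ rowStochastic ℝ S := by
  refine mem_rowStochastic_iff_sum.mpr ⟨fun s t => ?_, fun s => ?_⟩
  · rw [actMat_mul_apply]
    exact sum_nonneg fun a _ => mul_nonneg (hπ0 s a) (hP0 _ t)
  · simp_rw [actMat_mul_apply]
    rw [sum_comm]
    simp [← mul_sum, hP1, hπ1]

theorem noccVec_nonneg {S A : Type*} [Fintype S] [Fintype A] [DecidableEq S]
    {γ : ℝ} (hγ0 : 0 ≤ γ) (hγ1 : γ < 1)
    {P : Matrix (S × A) S ℝ} (hP0 : ∀ p s, 0 ≤ P p s) (hP1 : ∀ p, ∑ s, P p s = 1)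
    {ρ : S → ℝ} (hρ0 : ∀ s, 0 ≤ ρ s)
    {π : S → A → ℝ} (hπ0 : ∀ s a, 0 ≤ π s a) (hπ1 : ∀ s, ∑ a, π s a = 1) (s : S) :
    0 ≤ noccVec γ P ρ π s :=
  mul_nonneg (sub_nonneg.mpr hγ1.le) <| sum_nonneg fun t _ => mul_nonneg (hρ0 t) <|
    inv_one_sub_smul_nonneg_of_mem_rowStochastic
      (actMat_mul_mem_rowStochastic hπ0 hπ1 hP0 hP1) hγ0 hγ1 t s

theorem exists_one_lt_sum_mul_min_le_sum {ι : Type*} [Fintype ι] {x g : ι → ℝ}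
    (hx : ∀ i, 0 ≤ x i) {i₀ : ι} (hx₀ : 0 < x i₀) (hg₀ : g i₀ < 1) :
    ∃ C > (1 : ℝ), ∑ i, x i * min (g i) C ≤ ∑ i, x i := by
  classical
  set T := ∑ i, x i
  have hT : 0 < T := hx₀.trans_le (single_le_sum (fun i _ => hx i) (mem_univ i₀))
  set C := 1 + x i₀ * (1 - g i₀) / T
  have hC : (C - 1) * T = x i₀ * (1 - g i₀) := by simp only [C]; field_simp; ring
  have hC1 : 1 < C := lt_add_of_pos_right 1 (by have := sub_pos.mpr hg₀; positivity)
  refine ⟨C, hC1, ?_⟩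
  have hrest : ∑ i ∈ univ.erase i₀, x i * min (g i) C ≤ C * (T - x i₀) := by
    rw [← eq_sub_of_add_eq (sum_erase_add _ _ (mem_univ i₀)), mul_sum]
    exact sum_le_sum fun i _ => by
      rw [mul_comm C]; exact mul_le_mul_of_nonneg_left (min_le_right _ _) (hx i)
  rw [← add_sum_erase _ _ (mem_univ i₀), min_eq_left (hg₀.trans hC1).le]
  nlinarith [mul_pos (sub_pos.mpr hC1) hx₀]

theorem sum_mul_add_mul_le_of_sum_le {ι : Type*} [Fintype ι] {n u d m : ι → ℝ} {α : ℝ}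
    (hα : 0 ≤ α) (h : ∑ i, n i * d i * m i ≤ ∑ i, n i * d i) :
    ∑ i, n i * (u i + α * (m i * d i)) ≤ ∑ i, n i * (u i + α * d i) := by
  have hexpand (v : ι → ℝ) :
      ∑ i, n i * (u i + α * v i) = ∑ i, n i * u i + α * ∑ i, n i * v i := by
    simp only [mul_add, sum_add_distrib, mul_sum, mul_left_comm α]
  have h' : ∑ i, n i * (m i * d i) ≤ ∑ i, n i * d i := by
    simpa only [mul_assoc, mul_comm (d _)] using h
  rw [hexpand, hexpand]
  exact add_le_add_right (mul_le_mul_of_nonneg_left h' hα) _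

theorem clipped_f_state_aware_inf_le_general {S A : Type*} [Fintype S] [Fintype A]
    [DecidableEq S]
    (f : ℝ → ℝ)
    (P PD : Matrix (S × A) S ℝ)
    (hPD0 : ∀ p s, 0 ≤ PD p s) (hPD1 : ∀ p, ∑ s, PD p s = 1)
    (r : S × A → ℝ) (γ : ℝ) (hγ0 : 0 ≤ γ) (hγ1 : γ < 1)
    (ρ : S → ℝ) (hρ0 : ∀ s, 0 ≤ ρ s)
    (Pol : Finset (S → A → ℝ)) (hPolne : Pol.Nonempty)
    (hPol : ∀ π ∈ Pol, (∀ s a, 0 ≤ π s a) ∧ (∀ s, ∑ a, π s a = 1))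
    (πstar : S → A → ℝ)
    (α : ℝ) (hα : 0 < α)
    (dDat : S → ℝ)
    (Dis u : (S → A → ℝ) → S → ℝ)
    (hDis : ∀ π ∈ Pol, ∀ s, 0 ≤ Dis π s)
    (πbar : S → A → ℝ) (hπbar : πbar ∈ Pol)
    (hπbarmin : ∀ π ∈ Pol,
      ∑ s, ρ s * (valVec γ P r πstar s - valVec γ P r πbar s)
          + ∑ s, noccVec γ PD ρ πbar s * (u πbar s + α * Dis πbar s)
        ≤ ∑ s, ρ s * (valVec γ P r πstar s - valVec γ P r π s)
          + ∑ s, noccVec γ PD ρ π s * (u π s + α * Dis π s))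
    (hslack : ∃ s₀, 0 < noccVec γ PD ρ πbar s₀ * Dis πbar s₀ ∧
      f (noccVec γ PD ρ πbar s₀ / dDat s₀) < 1) :
    ∃ C > (1 : ℝ),
      Pol.inf' hPolne (fun π =>
          ∑ s, ρ s * (valVec γ P r πstar s - valVec γ P r π s)
            + ∑ s, noccVec γ PD ρ π s
                * (u π s + α * (min (f (noccVec γ PD ρ π s / dDat s)) C * Dis π s)))
        ≤ Pol.inf' hPolne (fun π =>
            ∑ s, ρ s * (valVec γ P r πstar s - valVec γ P r π s)
              + ∑ s, noccVec γ PD ρ π s * (u π s + α * Dis π s)) := by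
  obtain ⟨s₀, hpos, hlt⟩ := hslack
  have hocc : ∀ s, 0 ≤ noccVec γ PD ρ πbar s :=
    noccVec_nonneg hγ0 hγ1 hPD0 hPD1 hρ0 (hPol πbar hπbar).1 (hPol πbar hπbar).2
  obtain ⟨C, hC1, hpenalty⟩ :=
    exists_one_lt_sum_mul_min_le_sum (g := fun s => f (noccVec γ PD ρ πbar s / dDat s))
      (fun s => mul_nonneg (hocc s) (hDis πbar hπbar s)) hpos hlt
  refine ⟨C, hC1, (inf'_le _ hπbar).trans ?_⟩
  refine le_trans ?_ (le_inf' hPolne _ hπbarmin)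
  exact add_le_add_right (sum_mul_add_mul_le_of_sum_le hα.le hpenalty) _

/-- Theorem 7, f-state-aware large-α clipping. For a monotone increasing
`f` that is nonnegative on nonnegative inputs, if at the minimizer `π̄` of the plain infimum
term there is a state with positive occupancy-weighted divergence where `f(w^π̄(s₀)) < 1`,
then for some clipping level `C > 1` the infimum term with clipped `f`-state-aware penalty
`min(f∘w, C)·Dis` is at most the plain infimum term. -/
theorem clipped_f_state_aware_inf_le {S A : Type*} [Fintype S] [Fintype A]
    [Nonempty S] [Nonempty A] [DecidableEq S]
    (f : ℝ → ℝ) (hfmono : Monotone f) (hf0 : ∀ x : ℝ, 0 ≤ x → 0 ≤ f x)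
    (P PD : Matrix (S × A) S ℝ)
    (hP0 : ∀ p s, 0 ≤ P p s) (hP1 : ∀ p, ∑ s, P p s = 1)
    (hPD0 : ∀ p s, 0 ≤ PD p s) (hPD1 : ∀ p, ∑ s, PD p s = 1)
    (r : S × A → ℝ) (γ : ℝ) (hγ0 : 0 ≤ γ) (hγ1 : γ < 1)
    (ρ : S → ℝ) (hρ0 : ∀ s, 0 ≤ ρ s) (hρ1 : ∑ s, ρ s = 1)
    (Pol : Finset (S → A → ℝ)) (hPolne : Pol.Nonempty)
    (hPol : ∀ π ∈ Pol, (∀ s a, 0 ≤ π s a) ∧ (∀ s, ∑ a, π s a = 1))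
    (πstar : S → A → ℝ) (hπstar0 : ∀ s a, 0 ≤ πstar s a) (hπstar1 : ∀ s, ∑ a, πstar s a = 1)
    (α : ℝ) (hα : 0 < α)
    (dDat : S → ℝ) (hdDat : ∀ s, 0 < dDat s)
    (Dis u : (S → A → ℝ) → S → ℝ)
    (hDis : ∀ π ∈ Pol, ∀ s, 0 ≤ Dis π s)
    (πbar : S → A → ℝ) (hπbar : πbar ∈ Pol)
    (hπbarmin : ∀ π ∈ Pol,
      ∑ s, ρ s * (valVec γ P r πstar s - valVec γ P r πbar s)
          + ∑ s, noccVec γ PD ρ πbar s * (u πbar s + α * Dis πbar s)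
        ≤ ∑ s, ρ s * (valVec γ P r πstar s - valVec γ P r π s)
          + ∑ s, noccVec γ PD ρ π s * (u π s + α * Dis π s))
    (hslack : ∃ s₀, 0 < noccVec γ PD ρ πbar s₀ * Dis πbar s₀ ∧
      f (noccVec γ PD ρ πbar s₀ / dDat s₀) < 1) :
    ∃ C > (1 : ℝ),
      Pol.inf' hPolne (fun π =>
          ∑ s, ρ s * (valVec γ P r πstar s - valVec γ P r π s)
            + ∑ s, noccVec γ PD ρ π s
                * (u π s + α * (min (f (noccVec γ PD ρ π s / dDat s)) C * Dis π s)))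
        ≤ Pol.inf' hPolne (fun π =>
            ∑ s, ρ s * (valVec γ P r πstar s - valVec γ P r π s)
              + ∑ s, noccVec γ PD ρ π s * (u π s + α * Dis π s)) :=
  clipped_f_state_aware_inf_le_general f P PD hPD0 hPD1 r γ hγ0 hγ1 ρ hρ0 Pol hPolne hPol πstar α hα
    dDat Dis u hDis πbar hπbar hπbarmin hslack
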